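/- The Takagi function is (0, 1/2)-midconvex: for all x, y in [0,1], τ((x+y)/2) ≤ (τ(x)+τ(y))/2 + (1/2)|x−y|. -/
import Mathlib


open scoped BigOperators

/-- Distance from a real number to the nearest integer. -/
noncomputable def nearestDist (t : ℝ) : ℝ := |t - round t|

/-- The Takagi function. -/
noncomputable def takagi (x : ℝ) : ℝ := ∑' n : ℕ, (1 / 2 ^ n) * nearestDist (2 ^ n * x)

/-- Partial Takagi function of level `n`. -/
noncomputable def takagiPartial (n : ℕ) (x : ℝ) : ℝ :=
  ∑ j ∈ Finset.range n, (1 / 2 ^ j) * nearestDist (2 ^ j * x)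

/-- The symmetric tent map. -/
noncomputable def tent (x : ℝ) : ℝ := if x ≤ 1 / 2 then 2 * x else 2 - 2 * x

lemma nd_def (t : ℝ) : nearestDist t = |t - round t| := rfl

lemma nd_nonneg (t : ℝ) : 0 ≤ nearestDist t := abs_nonneg _

lemma nd_le_half (t : ℝ) : nearestDist t ≤ 1 / 2 := abs_sub_round t

lemma nd_le (t : ℝ) (k : ℤ) : nearestDist t ≤ |t - (k : ℝ)| := by
  by_cases hk : k = round t
  · rw [nd_def, hk]
  · have h1 : (1 : ℝ) ≤ |((round t : ℤ) : ℝ) - (k : ℝ)| := by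
      have : round t - k ≠ 0 := sub_ne_zero_of_ne (Ne.symm hk)
      have := Int.one_le_abs this
      exact_mod_cast this
    have h2 : |t - round t| ≤ 1 / 2 := abs_sub_round t
    have h3 : |((round t : ℤ):ℝ) - (k:ℝ)| ≤ |((round t:ℤ):ℝ) - t| + |t - (k:ℝ)| := abs_sub_le _ _ _
    have h4 : |((round t:ℤ):ℝ) - t| = |t - round t| := abs_sub_comm _ _
    rw [nd_def]
    linarith

lemma nd_eq (t : ℝ) (k : ℤ) (hk : |t - (k : ℝ)| ≤ 1 / 2) : nearestDist t = |t - (k : ℝ)| := by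
  refine le_antisymm (nd_le t k) ?_
  by_cases h : k = round t
  · rw [nd_def, h]
  · have h1 : (1 : ℝ) ≤ |((round t : ℤ) : ℝ) - (k : ℝ)| := by
      have : round t - k ≠ 0 := sub_ne_zero_of_ne (Ne.symm h)
      have := Int.one_le_abs this
      exact_mod_cast this
    have h3 : |((round t : ℤ):ℝ) - (k:ℝ)| ≤ |((round t:ℤ):ℝ) - t| + |t - (k:ℝ)| := abs_sub_le _ _ _
    have h4 : |((round t:ℤ):ℝ) - t| = |t - round t| := abs_sub_comm _ _
    rw [nd_def]
    linarith

lemma nd_subadd (a b : ℝ) : nearestDist (a + b) ≤ nearestDist a + nearestDist b := by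
  have h1 : nearestDist (a + b) ≤ |(a + b) - ((round a + round b : ℤ) : ℝ)| := nd_le _ _
  have h2 : |(a + b) - ((round a + round b : ℤ) : ℝ)| = |(a - round a) + (b - round b)| := by
    push_cast; ring_nf
  have h3 : |(a - round a) + (b - round b)| ≤ |a - round a| + |b - round b| := abs_add_le _ _
  simp only [nd_def] at h1 ⊢
  linarith [h1, h2.le, h2.ge]

lemma nd_add_half (t : ℝ) (l : ℤ) : 1 / 2 ≤ nearestDist t + |t - ((l : ℝ) + 1 / 2)| := by
  have h3 : |t - ((round t : ℤ) : ℝ)| + |t - ((l:ℝ) + 1/2)| ≥ |((round t : ℤ):ℝ) - ((l:ℝ) + 1/2)| := by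
    have := abs_sub_le ((round t : ℤ):ℝ) t ((l:ℝ) + 1/2)
    have h4 : |((round t:ℤ):ℝ) - t| = |t - ((round t:ℤ):ℝ)| := abs_sub_comm _ _
    linarith
  have h5 : 1/2 ≤ |((round t : ℤ):ℝ) - ((l:ℝ) + 1/2)| := by
    rcases le_or_gt (round t) l with h | h
    · rw [le_abs]
      right
      have : ((round t : ℤ):ℝ) ≤ (l:ℝ) := by exact_mod_cast h
      linarith
    · rw [le_abs]
      left
      have : (l:ℝ) + 1 ≤ ((round t : ℤ):ℝ) := by exact_mod_cast h
      linarith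
  rw [nd_def]
  linarith

lemma key (m h : ℝ) (hh : 0 ≤ h) :
    nearestDist m - (nearestDist (m - h) + nearestDist (m + h)) / 2
      ≤ max 0 (2 * h - nearestDist (2 * m)) / 2 - max 0 (h - nearestDist m) := by
  have hsub : nearestDist (2 * m) ≤ nearestDist (m - h) + nearestDist (m + h) := by
    have h1 := nd_subadd (m - h) (m + h)
    have h2 : (m - h) + (m + h) = 2 * m := by ring
    rwa [h2] at h1
  rcases le_total (nearestDist m) h with c | c
  · -- d m ≤ h : subadditivity case
    have h2 : max 0 (h - nearestDist m) = h - nearestDist m := max_eq_right (by linarith)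
    have h1 : 2 * h - nearestDist (2 * m) ≤ max 0 (2 * h - nearestDist (2 * m)) := le_max_right _ _
    linarith
  · have h2 : max 0 (h - nearestDist m) = 0 := max_eq_left (by linarith)
    rcases le_total (2 * h) (nearestDist (2 * m)) with c2 | c2
    · -- linear region
      have hmr : |m - ((round m : ℤ) : ℝ)| ≤ 1 / 2 := abs_sub_round m
      have hmax : (0:ℝ) ≤ max 0 (2 * h - nearestDist (2 * m)) := le_max_left _ _
      have hdm : nearestDist m = |m - ((round m : ℤ):ℝ)| := rfl
      rcases le_total ((round m : ℤ) : ℝ) m with hk | hk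
      · have e1 : nearestDist m = m - round m := by rw [hdm, abs_of_nonneg (by linarith)]
        have hp : nearestDist (2 * m) ≤ |2 * m - ((2 * round m + 1 : ℤ) : ℝ)| := nd_le _ _
        have hp2 : |2 * m - ((2 * round m + 1 : ℤ) : ℝ)| = 1 - 2 * (m - round m) := by
          push_cast
          rw [abs_of_nonpos (by rw [abs_of_nonneg (by linarith)] at hmr; linarith)]
          ring
      -- so m + h - round m ≤ 1/2
        have hub : m + h - round m ≤ 1 / 2 := by rw [hp2] at hp; linarith
        have e2 : nearestDist (m + h) = m + h - round m := by
          rw [nd_eq (m + h) (round m) (by rw [abs_of_nonneg (by linarith)]; linarith)]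
          rw [abs_of_nonneg (by linarith)]
        have hc2 : h ≤ m - ((round m : ℤ):ℝ) := by rw [← e1]; exact c
        have e3 : nearestDist (m - h) = m - h - round m := by
          rw [nd_eq (m - h) (round m) (by
            rw [abs_of_nonneg (by linarith)]
            rw [abs_of_nonneg (by linarith)] at hmr; linarith)]
          rw [abs_of_nonneg (by linarith)]
        linarith
      · have e1 : nearestDist m = round m - m := by rw [hdm, abs_of_nonpos (by linarith)]; ring
        have hp : nearestDist (2 * m) ≤ |2 * m - ((2 * round m - 1 : ℤ) : ℝ)| := nd_le _ _
        have hp2 : |2 * m - ((2 * round m - 1 : ℤ) : ℝ)| = 1 - 2 * ((round m : ℝ) - m) := by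
          push_cast
          rw [abs_of_nonneg (by rw [abs_of_nonpos (by linarith)] at hmr; linarith)]
          ring
        have hub : (round m : ℝ) - (m - h) ≤ 1 / 2 := by rw [hp2] at hp; linarith
        have e2 : nearestDist (m - h) = round m - (m - h) := by
          rw [nd_eq (m - h) (round m) (by rw [abs_of_nonpos (by linarith)]; linarith)]
          rw [abs_of_nonpos (by linarith)]; ring
        have e3 : nearestDist (m + h) = round m - (m + h) := by
          have hc : h ≤ (round m : ℝ) - m := by rw [← e1]; exact c
          rw [nd_eq (m + h) (round m) (by
            rw [abs_of_nonpos (by linarith)]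
            rw [abs_of_nonpos (by linarith)] at hmr; linarith)]
          rw [abs_of_nonpos (by linarith)]; ring
        linarith
    · -- peak case : nd (2m) ≤ 2h and h ≤ nd m
      have hj : nearestDist (2 * m) = |2 * m - ((round (2 * m) : ℤ) : ℝ)| := rfl
      rcases Int.even_or_odd (round (2 * m)) with ⟨l, hl⟩ | ⟨l, hl⟩
      · -- even: nd m ≤ nd(2m)/2 ≤ h
        have h1 : nearestDist m ≤ |m - (l : ℝ)| := nd_le m l
        have h2' : |2 * m - ((round (2 * m) : ℤ) : ℝ)| = 2 * |m - (l:ℝ)| := by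
          rw [hl]; push_cast
          rw [show (2:ℝ) * m - ((l:ℝ) + (l:ℝ)) = 2 * (m - (l:ℝ)) by ring, abs_mul, abs_two]
        have hle : nearestDist m ≤ h := by
          rw [h2'] at hj; linarith
        have h1' : 2 * h - nearestDist (2 * m) ≤ max 0 (2 * h - nearestDist (2 * m)) := le_max_right _ _
        linarith
      · -- odd
        have habs2 : |2 * m - ((round (2*m) : ℤ):ℝ)| ≤ 1/2 := abs_sub_round (2*m)
        set s : ℝ := m - ((l:ℝ) + 1/2) with hs_def
        clear_value s
        have harg : 2 * m - ((round (2*m) : ℤ):ℝ) = 2 * s := by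
          rw [hl, hs_def]; push_cast; ring
        have h2s : nearestDist (2 * m) = 2 * |s| := by
          rw [hj, harg, ← abs_two, ← abs_mul]; norm_num
        have hsh : |s| ≤ h := by rw [h2s] at c2; linarith
        have hs14 : |s| ≤ 1/4 := by rw [harg] at habs2; rw [abs_mul, abs_two] at habs2; linarith
        have hA := nd_add_half (m - h) l
        have hB := nd_add_half (m + h) l
        have hA' : |m - h - ((l:ℝ) + 1/2)| = h - s := by
          rw [show m - h - ((l:ℝ) + 1/2) = s - h by rw [hs_def]; ring]
          rw [abs_of_nonpos (by cases abs_le.mp hsh; linarith)]; ring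
        have hB' : |m + h - ((l:ℝ) + 1/2)| = s + h := by
          rw [show m + h - ((l:ℝ) + 1/2) = s + h by rw [hs_def]; ring]
          rw [abs_of_nonneg (by cases abs_le.mp hsh; linarith)]
        have hdm1 : 2 * nearestDist m + nearestDist (2 * m) ≤ 1 := by
          rcases le_total 0 s with hs0 | hs0
          · have : nearestDist m ≤ |m - ((l + 1 : ℤ):ℝ)| := nd_le m (l + 1)
            have he : |m - ((l + 1 : ℤ):ℝ)| = 1/2 - s := by
              push_cast
              rw [show m - ((l:ℝ) + 1) = s - 1/2 by rw [hs_def]; ring]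
              rw [abs_of_nonpos (by cases abs_le.mp hs14; linarith)]; ring
            rw [h2s, abs_of_nonneg hs0]; rw [he] at this; linarith
          · have : nearestDist m ≤ |m - ((l : ℤ):ℝ)| := nd_le m l
            have he : |m - ((l : ℤ):ℝ)| = 1/2 + s := by
              rw [show m - ((l:ℤ):ℝ) = s + 1/2 by rw [hs_def]; ring]
              rw [abs_of_nonneg (by cases abs_le.mp hs14; linarith)]; ring
            rw [h2s, abs_of_nonpos hs0]; rw [he] at this; linarith
        have h1' : 2 * h - nearestDist (2 * m) ≤ max 0 (2 * h - nearestDist (2 * m)) := le_max_right _ _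
        rw [hA'] at hA; rw [hB'] at hB
        linarith

lemma takagi_summable (x : ℝ) :
    Summable (fun n : ℕ => (1 / 2 ^ n : ℝ) * nearestDist (2 ^ n * x)) := by
  apply Summable.of_nonneg_of_le
    (fun n => mul_nonneg (by positivity) (nd_nonneg _))
    (fun n => ?_) summable_geometric_two
  have h1 : (1/2 : ℝ)^n = 1/2^n := by rw [div_pow, one_pow]
  rw [h1]
  have := nd_le_half (2 ^ n * x)
  have h2 : (0:ℝ) < 1/2^n := by positivity
  nlinarith [nd_nonneg (2 ^ n * x)]

lemma takagi_nonneg (x : ℝ) : 0 ≤ takagi x :=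
  tsum_nonneg fun n => mul_nonneg (by positivity) (nd_nonneg _)

lemma takagi_le_one (x : ℝ) : takagi x ≤ 1 := by
  have h1 : takagi x ≤ ∑' n : ℕ, (1/2 : ℝ)^n * (1/2) := by
    apply Summable.tsum_le_tsum _ (takagi_summable x) (Summable.mul_right _ summable_geometric_two)
    intro n
    have h1 : (1/2 : ℝ)^n = 1/2^n := by rw [div_pow, one_pow]
    rw [h1]
    have := nd_le_half (2 ^ n * x)
    have h2 : (0:ℝ) < 1/2^n := by positivity
    nlinarith [nd_nonneg (2 ^ n * x)]
  rw [tsum_mul_right, tsum_geometric_two] at h1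
  linarith

lemma takagi_rec (x : ℝ) : takagi x = nearestDist x + takagi (2 * x) / 2 := by
  have hs := takagi_summable x
  rw [takagi, Summable.tsum_eq_zero_add hs]
  have h0 : (1 / 2 ^ (0:ℕ) : ℝ) * nearestDist (2 ^ (0:ℕ) * x) = nearestDist x := by norm_num
  have h1 : ∀ n : ℕ, (1 / 2 ^ (n+1) : ℝ) * nearestDist (2 ^ (n+1) * x)
      = (1/2) * ((1 / 2 ^ n : ℝ) * nearestDist (2 ^ n * (2 * x))) := by
    intro n
    have harg : (2:ℝ) ^ (n+1) * x = 2 ^ n * (2 * x) := by ring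
    rw [harg]; ring
  rw [h0, tsum_congr h1, tsum_mul_left, takagi]
  ring

lemma takagi_bound (N : ℕ) : ∀ m h : ℝ, 0 ≤ h →
    takagi m - (takagi (m - h) + takagi (m + h)) / 2
      ≤ h - max 0 (h - nearestDist m) + 1 / 2 ^ N := by
  induction N with
  | zero =>
    intro m h hh
    have h1 := takagi_le_one m
    have h2 := takagi_nonneg (m - h)
    have h3 := takagi_nonneg (m + h)
    have h4 : max 0 (h - nearestDist m) ≤ h := max_le hh (by linarith [nd_nonneg m])
    norm_num
    linarith
  | succ N ih =>
    intro m h hh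
    have r1 := takagi_rec m
    have r2 := takagi_rec (m - h)
    have r3 := takagi_rec (m + h)
    rw [show 2 * (m - h) = 2 * m - 2 * h by ring] at r2
    rw [show 2 * (m + h) = 2 * m + 2 * h by ring] at r3
    have IH := ih (2 * m) (2 * h) (by linarith)
    have K := key m h hh
    have pow1 : (1:ℝ) / 2 ^ (N+1) = (1 / 2 ^ N) / 2 := by rw [pow_succ]; ring
    linarith

lemma takagi_S_le (m h : ℝ) (hh : 0 ≤ h) :
    takagi m - (takagi (m - h) + takagi (m + h)) / 2 ≤ h := by
  by_contra hc
  push_neg at hc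
  obtain ⟨N, hN⟩ := exists_pow_lt_of_lt_one
    (show (0:ℝ) < takagi m - (takagi (m - h) + takagi (m + h)) / 2 - h by linarith)
    (show (1/2 : ℝ) < 1 by norm_num)
  have hb := takagi_bound N m h hh
  have hm : (0:ℝ) ≤ max 0 (h - nearestDist m) := le_max_left _ _
  have hp : (1/2 : ℝ)^N = 1/2^N := by rw [div_pow, one_pow]
  rw [hp] at hN
  linarith

theorem takagi_midconvex (x y : ℝ) (hx : x ∈ Set.Icc (0:ℝ) 1)
    (hy : y ∈ Set.Icc (0:ℝ) 1) :
    takagi ((x + y) / 2) ≤ (takagi x + takagi y) / 2 + (1 / 2) * |x - y| := by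
  rcases le_total x y with hxy | hxy
  · have ha : |x - y| = y - x := by rw [abs_of_nonpos (by linarith)]; ring
    have hk := takagi_S_le ((x + y) / 2) ((y - x) / 2) (by linarith)
    rw [show (x + y) / 2 - (y - x) / 2 = x by ring,
        show (x + y) / 2 + (y - x) / 2 = y by ring] at hk
    rw [ha]
    linarith
  · have ha : |x - y| = x - y := abs_of_nonneg (by linarith)
    have hk := takagi_S_le ((x + y) / 2) ((x - y) / 2) (by linarith)
    rw [show (x + y) / 2 - (x - y) / 2 = y by ring,
        show (x + y) / 2 + (x - y) / 2 = x by ring] at hk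
    rw [ha]
    linarith
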